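/- Let (Σ, A, X, L, l₀, Δ) be a register automaton. A configuration ⟨l, v⟩ is reachable if and only if the representative configuration ⟨l, [v]⟩ is reachable, i.e., if and only if there exist k ≥ 0 and valuations v_0, …, v_k with ⟨l_0, [v_0]⟩ ⇝ ⟨l_1, [v_1]⟩ ⇝ ⋯ ⇝ ⟨l_k, [v_k]⟩, l_0 = l₀ the initial location, l_k = l, and [v_k] = [v]. -/
import Mathlib


/-- A term over registers `X`, formal parameters `p₁,…,pₙ`, and constants from the alphabet. -/
inductive Term (X Sig : Type) (n : ℕ) where
  | reg (x : X)
  | par (i : Fin n)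
  | const (c : Sig)

/-- The value of a term under a register valuation `v` and parameter valuation `d`. -/
def Term.val {X Sig : Type} {n : ℕ} (v : X → Sig) (d : Fin n → Sig) : Term X Sig n → Sig
  | .reg x => v x
  | .par i => d i
  | .const c => c

/-- All constants occurring in the term belong to `C`. -/
def Term.ConstIn {X Sig : Type} {n : ℕ} (C : Finset Sig) : Term X Sig n → Prop
  | .const c => c ∈ C
  | _ => True

/-- An atomic guard: an equality `e = f` or a disequality `e ≠ f` between terms. -/
inductive Atom (X Sig : Type) (n : ℕ) where
  | eq (e f : Term X Sig n)
  | ne (e f : Term X Sig n)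

/-- Satisfaction of an atomic guard. -/
def Atom.Sat {X Sig : Type} {n : ℕ} (v : X → Sig) (d : Fin n → Sig) : Atom X Sig n → Prop
  | .eq e f => Term.val v d e = Term.val v d f
  | .ne e f => Term.val v d e ≠ Term.val v d f

def Atom.ConstIn {X Sig : Type} {n : ℕ} (C : Finset Sig) : Atom X Sig n → Prop
  | .eq e f => Term.ConstIn C e ∧ Term.ConstIn C f
  | .ne e f => Term.ConstIn C e ∧ Term.ConstIn C f

/-- A guard is a finite conjunction of atomic guards. -/
abbrev Guard (X Sig : Type) (n : ℕ) : Type := List (Atom X Sig n)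

/-- `v, d ⊨ g`: every conjunct of the guard holds. -/
def Guard.Sat {X Sig : Type} {n : ℕ} (v : X → Sig) (d : Fin n → Sig) (g : Guard X Sig n) : Prop :=
  ∀ a ∈ g, Atom.Sat v d a

def Guard.ConstIn {X Sig : Type} {n : ℕ} (C : Finset Sig) (g : Guard X Sig n) : Prop :=
  ∀ a ∈ g, Atom.ConstIn C a

/-- An assignment `(x_{k_1} … x_{k_m}) ↦ (e_{l_1} … e_{l_m})`, as a list of pairs. -/
abbrev Assignment (X Sig : Type) (n : ℕ) : Type := List (X × Term X Sig n)

/-- The assigned registers are pairwise distinct. -/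
def Assignment.Wf {X Sig : Type} {n : ℕ} (π : Assignment X Sig n) : Prop :=
  (List.map Prod.fst π).Nodup

/-- `⟦π⟧_{v,d}`: the set of valuations `v'` with `v' (x_{k_i})` the value of `e_{l_i}` under `(v,d)`. -/
def Assignment.Sem {X Sig : Type} {n : ℕ} (π : Assignment X Sig n) (v : X → Sig)
    (d : Fin n → Sig) : Set (X → Sig) :=
  {v' | ∀ p ∈ π, v' p.1 = Term.val v d p.2}

def Assignment.ConstIn {X Sig : Type} {n : ℕ} (C : Finset Sig) (π : Assignment X Sig n) : Prop :=
  ∀ p ∈ π, Term.ConstIn C (p.2 : Term X Sig n)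
/-- `u ∼_C v`: there is an automorphism (bijection) of the alphabet which is invariant on the
constants `C` and maps `u` to `v` pointwise. -/
def EquivC {X Sig : Type} (C : Finset Sig) (u v : X → Sig) : Prop :=
  ∃ σ : Equiv.Perm Sig, (∀ c ∈ C, σ c = c) ∧ ∀ x, σ (u x) = v x

/-- `[v]`: the `∼_C` equivalence class of the valuation `v`. -/
def eqClass {X Sig : Type} (C : Finset Sig) (v : X → Sig) : Set (X → Sig) :=
  {u | EquivC C u v}
/-- A transition `(l, α, g, π, l')` of a register automaton. -/
structure Transition (Sig X A L : Type) (arity : A → ℕ) where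
  src : L
  act : A
  guard : Guard X Sig (arity act)
  assign : Assignment X Sig (arity act)
  tgt : L

def Transition.ConstIn {Sig X A L : Type} {arity : A → ℕ} (C : Finset Sig)
    (t : Transition Sig X A L arity) : Prop :=
  Guard.ConstIn C t.guard ∧ Assignment.ConstIn C t.assign

/-- A register automaton `(Σ, A, X, L, l₀, Δ)` over constants `C`: each action has an arity,
there is an initial location, and a finite set of transitions whose guards and assignments
only mention constants of `C` and assign pairwise distinct registers. -/
structure RegisterAutomaton (Sig X A L : Type) (C : Finset Sig) where
  arity : A → ℕ
  init : L
  Δ : Set (Transition Sig X A L arity)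
  finΔ : Δ.Finite
  wf : ∀ t ∈ Δ, Transition.ConstIn C t ∧ Assignment.Wf t.assign

/-- `⟨l, v⟩ →^{α(d)} ⟨l', v'⟩`: some transition `(l, α, g, π, l') ∈ Δ` satisfies
`v, d ⊨ g` and `v' ∈ ⟦π⟧_{v,d}`. -/
def RegisterAutomaton.Step {Sig X A L : Type} {C : Finset Sig}
    (RA : RegisterAutomaton Sig X A L C) (l : L) (v : X → Sig) (α : A)
    (d : Fin (RA.arity α) → Sig) (l' : L) (v' : X → Sig) : Prop :=
  ∃ (g : Guard X Sig (RA.arity α)) (π : Assignment X Sig (RA.arity α)),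
    (⟨l, α, g, π, l'⟩ : Transition Sig X A L RA.arity) ∈ RA.Δ ∧
      Guard.Sat v d g ∧ v' ∈ Assignment.Sem π v d

/-- One step on configurations, for some data symbol `α(d)`. -/
def RegisterAutomaton.StepAny {Sig X A L : Type} {C : Finset Sig}
    (RA : RegisterAutomaton Sig X A L C) (c c' : L × (X → Sig)) : Prop :=
  ∃ (α : A) (d : Fin (RA.arity α) → Sig), RA.Step c.1 c.2 α d c'.1 c'.2

/-- A configuration `⟨l, v⟩` is reachable: there is a run from the initial location
(with an arbitrary initial valuation) ending in `⟨l, v⟩`. -/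
def RegisterAutomaton.Reachable {Sig X A L : Type} {C : Finset Sig}
    (RA : RegisterAutomaton Sig X A L C) (l : L) (v : X → Sig) : Prop :=
  ∃ v₀ : X → Sig, Relation.ReflTransGen RA.StepAny (RA.init, v₀) (l, v)

/-- `⟨l, S⟩ ⇝ ⟨l', S'⟩` for sets of valuations (representative configurations):
every member of `S` steps to some member of `S'` and vice versa. -/
def RegisterAutomaton.RepStep {Sig X A L : Type} {C : Finset Sig}
    (RA : RegisterAutomaton Sig X A L C) (l : L) (S : Set (X → Sig)) (l' : L)
    (S' : Set (X → Sig)) : Prop :=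
  (∀ u ∈ S, ∃ u' ∈ S', ∃ (α : A) (d : Fin (RA.arity α) → Sig), RA.Step l u α d l' u') ∧
  (∀ u' ∈ S', ∃ u ∈ S, ∃ (α : A) (d : Fin (RA.arity α) → Sig), RA.Step l u α d l' u')
lemma term_val_perm {X Sig : Type} {n : ℕ} {C : Finset Sig} (σ : Equiv.Perm Sig)
    (hσ : ∀ c ∈ C, σ c = c) (u : X → Sig) (d : Fin n → Sig) (e : Term X Sig n)
    (he : Term.ConstIn C e) :
    Term.val (σ ∘ u) (σ ∘ d) e = σ (Term.val u d e) := by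
  cases e with
  | reg x => rfl
  | par i => rfl
  | const c => exact (hσ c he).symm

lemma step_perm {Sig X A L : Type} {C : Finset Sig} (RA : RegisterAutomaton Sig X A L C)
    (σ : Equiv.Perm Sig) (hσ : ∀ c ∈ C, σ c = c) {l l' : L} {u u' : X → Sig} {α : A}
    {d : Fin (RA.arity α) → Sig} (h : RA.Step l u α d l' u') :
    RA.Step l (σ ∘ u) α (σ ∘ d) l' (σ ∘ u') := by
  obtain ⟨g, π, hmem, hg, hπ⟩ := h
  obtain ⟨⟨hgC, hπC⟩, _⟩ := RA.wf _ hmem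
  refine ⟨g, π, hmem, ?_, ?_⟩
  · intro a ha
    have hC := hgC a ha
    have hsat := hg a ha
    cases a with
    | eq e f =>
      simp only [Atom.Sat] at hsat ⊢
      rw [term_val_perm σ hσ u d e hC.1, term_val_perm σ hσ u d f hC.2, hsat]
    | ne e f =>
      simp only [Atom.Sat] at hsat ⊢
      rw [term_val_perm σ hσ u d e hC.1, term_val_perm σ hσ u d f hC.2]
      exact fun hh => hsat (σ.injective hh)
  · intro p hp
    have := hπ p hp
    show σ (u' p.1) = _
    rw [term_val_perm σ hσ u d p.2 (hπC p hp), this]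

lemma repStep_of_step {Sig X A L : Type} {C : Finset Sig} (RA : RegisterAutomaton Sig X A L C)
    {l l' : L} {u u' : X → Sig} {α : A} {d : Fin (RA.arity α) → Sig}
    (h : RA.Step l u α d l' u') :
    RA.RepStep l (eqClass C u) l' (eqClass C u') := by
  constructor
  · rintro w ⟨σ, hσ, hw⟩
    refine ⟨σ.symm ∘ u', ⟨σ, hσ, fun x => σ.apply_symm_apply _⟩, α, σ.symm ∘ d, ?_⟩
    have hw' : w = σ.symm ∘ u := funext fun x => by
      simp [Function.comp, ← hw x]
    rw [hw']
    exact step_perm RA σ.symm (fun c hc => by rw [Equiv.symm_apply_eq, hσ c hc]) h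
  · rintro w' ⟨σ, hσ, hw'⟩
    refine ⟨σ.symm ∘ u, ⟨σ, hσ, fun x => σ.apply_symm_apply _⟩, α, σ.symm ∘ d, ?_⟩
    have hw : w' = σ.symm ∘ u' := funext fun x => by
      simp [Function.comp, ← hw' x]
    rw [hw]
    exact step_perm RA σ.symm (fun c hc => by rw [Equiv.symm_apply_eq, hσ c hc]) h

lemma mem_eqClass_self {X Sig : Type} (C : Finset Sig) (v : X → Sig) :
    v ∈ eqClass C v :=
  ⟨Equiv.refl Sig, fun _ _ => rfl, fun _ => rfl⟩

/-- `⟨l, v⟩` is reachable iff the representative configuration `⟨l, [v]⟩` is reachable: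
there are `k ≥ 0` and valuations `v₀, …, v_k` with
`⟨l₀, [v₀]⟩ ⇝ ⟨l₁, [v₁]⟩ ⇝ ⋯ ⇝ ⟨l_k, [v_k]⟩`, `l₀` the initial location, `l_k = l`,
and `[v_k] = [v]`. -/
theorem reachable_iff_repReachable {Sig X A L : Type} [Infinite Sig] [Finite X] [Finite A]
    [Finite L] {C : Finset Sig} (RA : RegisterAutomaton Sig X A L C) (l : L) (v : X → Sig) :
    RA.Reachable l v ↔
      ∃ (k : ℕ) (ls : Fin (k + 1) → L) (vs : Fin (k + 1) → (X → Sig)),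
        ls 0 = RA.init ∧ ls (Fin.last k) = l ∧
        eqClass C (vs (Fin.last k)) = eqClass C v ∧
        ∀ i : Fin k, RA.RepStep (ls i.castSucc) (eqClass C (vs i.castSucc))
          (ls i.succ) (eqClass C (vs i.succ)) := by
  constructor
  · rintro ⟨v₀, hrun⟩
    suffices h : ∀ c : L × (X → Sig), Relation.ReflTransGen RA.StepAny (RA.init, v₀) c →
        ∃ (k : ℕ) (ls : Fin (k + 1) → L) (vs : Fin (k + 1) → (X → Sig)),
          ls 0 = RA.init ∧ ls (Fin.last k) = c.1 ∧
          eqClass C (vs (Fin.last k)) = eqClass C c.2 ∧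
          ∀ i : Fin k, RA.RepStep (ls i.castSucc) (eqClass C (vs i.castSucc))
            (ls i.succ) (eqClass C (vs i.succ)) from h (l, v) hrun
    intro c hc
    induction hc with
    | refl => exact ⟨0, fun _ => RA.init, fun _ => v₀, rfl, rfl, rfl, fun i => i.elim0⟩
    | tail hab hbc ih =>
      obtain ⟨k, ls, vs, h0, hl, hv, hstep⟩ := ih
      obtain ⟨α, d, hs⟩ := hbc
      rename_i b c'
      refine ⟨k + 1, Fin.snoc ls c'.1, Fin.snoc vs c'.2, ?_, ?_, ?_, ?_⟩
      · rw [show (0 : Fin (k + 2)) = (0 : Fin (k + 1)).castSucc by simp, Fin.snoc_castSucc]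
        exact h0
      · rw [Fin.snoc_last]
      · rw [Fin.snoc_last]
      · intro i
        induction i using Fin.lastCases with
        | last =>
          rw [Fin.succ_last, Fin.snoc_last, Fin.snoc_last, Fin.snoc_castSucc,
            Fin.snoc_castSucc, hl, hv]
          exact repStep_of_step RA hs
        | cast j =>
          rw [Fin.snoc_castSucc, Fin.snoc_castSucc, Fin.succ_castSucc,
            Fin.snoc_castSucc, Fin.snoc_castSucc]
          exact hstep j
  · rintro ⟨k, ls, vs, h0, hl, hv, hstep⟩
    have hvmem : v ∈ eqClass C (vs (Fin.last k)) := by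
      rw [hv]; exact mem_eqClass_self C v
    suffices h : ∀ j : Fin (k + 1), ∀ w ∈ eqClass C (vs j),
        ∃ w0, Relation.ReflTransGen RA.StepAny (ls 0, w0) (ls j, w) by
      obtain ⟨w0, hrun⟩ := h (Fin.last k) v hvmem
      rw [h0, hl] at hrun
      exact ⟨w0, hrun⟩
    intro j
    induction j using Fin.induction with
    | zero => exact fun w _ => ⟨w, Relation.ReflTransGen.refl⟩
    | succ i ih =>
      intro w hw
      obtain ⟨u, hu, α, d, hs⟩ := (hstep i).2 w hw
      obtain ⟨w0, hrun⟩ := ih u hu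
      exact ⟨w0, hrun.tail ⟨α, d, hs⟩⟩
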